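/- Let N ≥ 2 be an integer and let x₀ lie in the interior of C_N^A. Then there exists a unique continuously differentiable function φ : [0,∞) → ℝ^N with φ(0) = x₀ such that φ(t) lies in the interior of C_N^A for every t ≥ 0 and φ solves the ODE of type A_{N−1}, i.e. φ_i'(t) = ∑_{j≠i} 1/(φ_i(t) − φ_j(t)) for all i = 1,…,N and all t ≥ 0. -/

import Mathlib

/-!
Along a solution, `∑ xᵢ²` grows linearly (its derivative is `N (N - 1)`), so the coordinates stay
bounded on bounded time intervals, while `∑_{i ≠ j} log |xᵢ - xⱼ|` is nondecreasing (its
derivative is `2 ∑ ẋᵢ²`). Together these bound every gap `xᵢ - xⱼ` from below up to any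
horizon, so near the solution the vector field is bounded and Lipschitz with uniform constants,
and Picard–Lindelöf steps of uniform length reach the horizon. Uniqueness follows from the
Lipschitz bound on the compact set swept out by two solutions, which stays away from the walls.
-/

open scoped BigOperators

noncomputable section

/-- The interior of the closed Weyl chamber of type A,
`C_N^A = {x : x_1 ≥ x_2 ≥ … ≥ x_N}`: strictly decreasing coordinates. -/
def interiorA {N : ℕ} (x : Fin N → ℝ) : Prop := StrictAnti x

/-- `φ` solves the ODE of type `A_{N-1}`,
`dx_i/dt = ∑_{j ≠ i} 1/(x_i - x_j)`, on `[0,∞)`. -/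
def solvesA {N : ℕ} (φ : ℝ → Fin N → ℝ) : Prop :=
  ∀ t ∈ Set.Ici (0:ℝ), ∀ i : Fin N,
    HasDerivWithinAt (fun s => φ s i)
      (∑ j ∈ Finset.univ.erase i, 1 / (φ t i - φ t j)) (Set.Ici 0) t

open scoped NNReal Topology
open Set Metric

namespace WeylChamberODE

section Algebra

open Finset

variable {ι : Type*} [Fintype ι] [DecidableEq ι]

def fieldA (x : ι → ℝ) : ι → ℝ := fun i => ∑ j ∈ univ.erase i, (x i - x j)⁻¹

/-- `Real.log` is `log |·|`, so this is `2 log |Vandermonde(x)|`. -/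
def logGap (x : ι → ℝ) : ℝ := ∑ i, ∑ j ∈ univ.erase i, Real.log (x i - x j)

lemma sum_sum_erase_swap {M : Type*} [AddCommMonoid M] (g : ι → ι → M) :
    ∑ i, ∑ j ∈ univ.erase i, g j i = ∑ i, ∑ j ∈ univ.erase i, g i j :=
  Finset.sum_comm' (by simp [ne_comm])

lemma sum_sum_erase_const (c : ℝ) :
    ∑ i : ι, ∑ _j ∈ univ.erase i, c = Fintype.card ι * (Fintype.card ι - 1) * c := by
  have hcard : ∀ i : ι, ((univ.erase i).card : ℝ) = Fintype.card ι - 1 := fun i => by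
    rw [card_erase_of_mem (mem_univ i), card_univ, Nat.cast_sub (Fintype.card_pos_iff.2 ⟨i⟩),
      Nat.cast_one]
  simp only [sum_const, nsmul_eq_mul, hcard, card_univ]
  ring

lemma sum_sum_erase_sub_mul_inv (a x : ι → ℝ) :
    ∑ i, ∑ j ∈ univ.erase i, (a i - a j) * (x i - x j)⁻¹ = 2 * ∑ i, a i * fieldA x i := by
  have hswap : ∑ i, ∑ j ∈ univ.erase i, a j * (x i - x j)⁻¹ =
      -∑ i, ∑ j ∈ univ.erase i, a i * (x i - x j)⁻¹ := by
    rw [← sum_sum_erase_swap fun i j => a i * (x i - x j)⁻¹]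
    simp only [← sum_neg_distrib]
    refine sum_congr rfl fun i _ => sum_congr rfl fun j _ => ?_
    rw [← neg_sub (x i) (x j), inv_neg, mul_neg, neg_neg]
  have hfield : ∑ i, a i * fieldA x i = ∑ i, ∑ j ∈ univ.erase i, a i * (x i - x j)⁻¹ := by
    simp only [fieldA, mul_sum]
  simp only [hfield, sub_mul, sum_sub_distrib, hswap]
  ring

lemma two_mul_sum_mul_fieldA_self {x : ι → ℝ} (hx : Function.Injective x) :
    2 * ∑ i, x i * fieldA x i = Fintype.card ι * (Fintype.card ι - 1) := by
  rw [← sum_sum_erase_sub_mul_inv, ← mul_one (_ * _), ← sum_sum_erase_const]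
  refine sum_congr rfl fun i _ => sum_congr rfl fun j hj => ?_
  exact mul_inv_cancel₀ (sub_ne_zero.2 (hx.ne (ne_of_mem_erase hj).symm))

lemma two_mul_sum_sq_fieldA (x : ι → ℝ) :
    ∑ i, ∑ j ∈ univ.erase i, (fieldA x i - fieldA x j) / (x i - x j) =
      2 * ∑ i, fieldA x i ^ 2 := by
  simp only [div_eq_mul_inv, sum_sum_erase_sub_mul_inv, sq]

lemma exp_logGap_le_abs_sub {x : ι → ℝ} (hx : Function.Injective x) {D : ℝ} (hD : 1 ≤ D)
    (hxD : ∀ i j, |x i - x j| ≤ D) {i j : ι} (hij : i ≠ j) :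
    Real.exp (logGap x - Fintype.card ι * (Fintype.card ι - 1) * Real.log D) ≤ |x i - x j| := by
  have habs : ∀ {a b}, a ≠ b → 0 < |x a - x b| := fun h => abs_pos.2 (sub_ne_zero.2 (hx.ne h))
  have hterm : ∀ a, ∀ b ∈ univ.erase a, 0 ≤ Real.log D - Real.log (x a - x b) := fun a b hb => by
    rw [sub_nonneg, ← Real.log_abs (x a - x b)]
    exact Real.log_le_log (habs (ne_of_mem_erase hb).symm) (hxD a b)
  have hsingle : Real.log D - Real.log (x i - x j) ≤
      ∑ a, ∑ b ∈ univ.erase a, (Real.log D - Real.log (x a - x b)) :=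
    calc _ ≤ ∑ b ∈ univ.erase i, (Real.log D - Real.log (x i - x b)) :=
          single_le_sum (hterm i) (mem_erase.2 ⟨hij.symm, mem_univ j⟩)
      _ ≤ _ := single_le_sum (f := fun a => ∑ b ∈ univ.erase a, _)
          (fun a _ => sum_nonneg (hterm a)) (mem_univ i)
  rw [← Real.le_log_iff_exp_le (habs hij), Real.log_abs]
  simp only [sum_sub_distrib, sum_sum_erase_const] at hsingle
  have := Real.log_nonneg hD
  unfold logGap
  linarith

end Algebra

variable {N : ℕ}

section GapSet

open Finset

def gapSet (ε : ℝ) : Set (Fin N → ℝ) := {x | ∀ i j, i < j → ε ≤ x i - x j}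

lemma strictAnti_of_mem_gapSet {ε : ℝ} (hε : 0 < ε) {x : Fin N → ℝ} (hx : x ∈ gapSet ε) :
    StrictAnti x := fun i j hij => by linarith [hx i j hij]

lemma le_abs_sub_of_mem_gapSet {ε : ℝ} {x : Fin N → ℝ} (hx : x ∈ gapSet ε) {i j : Fin N}
    (hij : i ≠ j) : ε ≤ |x i - x j| := by
  rcases hij.lt_or_gt with h | h
  · exact (hx i j h).trans (le_abs_self _)
  · rw [abs_sub_comm]; exact (hx j i h).trans (le_abs_self _)

lemma closedBall_subset_gapSet {ε r : ℝ} {y : Fin N → ℝ} (hy : y ∈ gapSet ε) :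
    closedBall y r ⊆ gapSet (ε - 2 * r) := fun z hz i j hij => by
  have hz' : ∀ k, |z k - y k| ≤ r := fun k => by
    rw [← Real.dist_eq]; exact (dist_le_pi_dist z y k).trans (mem_closedBall.1 hz)
  linarith [hy i j hij, neg_le_of_abs_le (hz' i), le_of_abs_le (hz' j)]

lemma card_erase_le_fin (i : Fin N) : ((univ.erase i).card : ℝ) ≤ N := by
  exact_mod_cast (card_erase_le.trans_eq (card_fin N))

lemma norm_fieldA_le {ε : ℝ} (hε : 0 < ε) {x : Fin N → ℝ} (hx : x ∈ gapSet ε) :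
    ‖fieldA x‖ ≤ N / ε := by
  refine (pi_norm_le_iff_of_nonneg (by positivity)).2 fun i => ?_
  calc ‖fieldA x i‖ ≤ ∑ j ∈ univ.erase i, ‖(x i - x j)⁻¹‖ := norm_sum_le _ _
    _ ≤ ∑ _j ∈ univ.erase i, ε⁻¹ := sum_le_sum fun j hj => by
        rw [norm_inv, Real.norm_eq_abs]
        exact inv_anti₀ hε (le_abs_sub_of_mem_gapSet hx (ne_of_mem_erase hj).symm)
    _ ≤ N / ε := by
        rw [sum_const, nsmul_eq_mul, div_eq_mul_inv]
        exact mul_le_mul_of_nonneg_right (card_erase_le_fin i) (by positivity)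

lemma abs_inv_sub_inv_le {a b ε : ℝ} (hε : 0 < ε) (ha : ε ≤ |a|) (hb : ε ≤ |b|) :
    |a⁻¹ - b⁻¹| ≤ |a - b| / ε ^ 2 := by
  have ha0 : a ≠ 0 := abs_pos.1 (hε.trans_le ha)
  have hb0 : b ≠ 0 := abs_pos.1 (hε.trans_le hb)
  rw [inv_sub_inv ha0 hb0, abs_div, abs_mul, abs_sub_comm]
  exact div_le_div_of_nonneg_left (abs_nonneg _) (by positivity) (by nlinarith)

lemma lipschitzOnWith_fieldA {ε : ℝ} (hε : 0 < ε) :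
    LipschitzOnWith (2 * N / ε ^ 2).toNNReal (fieldA (ι := Fin N)) (gapSet ε) := by
  refine LipschitzOnWith.of_dist_le_mul fun x hx y hy => ?_
  rw [Real.coe_toNNReal _ (by positivity), dist_pi_le_iff (by positivity)]
  intro i
  have hterm : ∀ j ∈ univ.erase i,
      |(x i - x j)⁻¹ - (y i - y j)⁻¹| ≤ 2 * dist x y / ε ^ 2 := fun j hj => by
    have hij := (ne_of_mem_erase hj).symm
    refine (abs_inv_sub_inv_le hε (le_abs_sub_of_mem_gapSet hx hij)
      (le_abs_sub_of_mem_gapSet hy hij)).trans (div_le_div_of_nonneg_right ?_ (by positivity))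
    have hk : ∀ k, |x k - y k| ≤ dist x y := fun k => by
      rw [← Real.dist_eq]; exact dist_le_pi_dist x y k
    calc |x i - x j - (y i - y j)| = |(x i - y i) - (x j - y j)| := by ring_nf
      _ ≤ |x i - y i| + |x j - y j| := abs_sub _ _
      _ ≤ 2 * dist x y := by linarith [hk i, hk j]
  calc dist (fieldA x i) (fieldA y i)
      ≤ ∑ j ∈ univ.erase i, |(x i - x j)⁻¹ - (y i - y j)⁻¹| := by
        rw [Real.dist_eq, fieldA, fieldA, ← sum_sub_distrib]
        exact abs_sum_le_sum_abs _ _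
    _ ≤ ∑ _j ∈ univ.erase i, 2 * dist x y / ε ^ 2 := sum_le_sum hterm
    _ ≤ N * (2 * dist x y / ε ^ 2) := by
        rw [sum_const, nsmul_eq_mul]
        exact mul_le_mul_of_nonneg_right (card_erase_le_fin i) (by positivity)
    _ = 2 * N / ε ^ 2 * dist x y := by ring

lemma exists_subset_gapSet_of_isCompact {K : Set (Fin N → ℝ)} (hK : IsCompact K)
    (hKA : ∀ x ∈ K, StrictAnti x) : ∃ ε > 0, K ⊆ gapSet ε := by
  have hpair : ∀ p : Fin N × Fin N, ∀ᶠ ε in 𝓝[>] (0 : ℝ),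
      p.1 < p.2 → ∀ x ∈ K, ε ≤ x p.1 - x p.2 := fun p => by
    by_cases hp : p.1 < p.2
    · obtain ⟨m, hm, hmK⟩ := hK.exists_forall_le' (f := fun x => x p.1 - x p.2)
        (by fun_prop) fun x hx => sub_pos.2 (hKA x hx hp)
      filter_upwards [Ioc_mem_nhdsGT hm] with ε hε
      exact fun _ x hx => hε.2.trans (hmK x hx)
    · exact .of_forall fun _ h => absurd h hp
  obtain ⟨ε, hε, hεK⟩ := ((Filter.eventually_all.2 hpair).and self_mem_nhdsWithin).exists
  exact ⟨ε, hεK, fun x hx i j hij => hε (i, j) hij x hx⟩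

end GapSet

section ODE

variable {E : Type*} [NormedAddCommGroup E] [NormedSpace ℝ E]

lemma hasDerivWithinAt_Ici_of_Icc {f : ℝ → E} {f' : E} {a b t : ℝ} (ht : t ∈ Ico a b)
    (h : HasDerivWithinAt f f' (Icc a b) t) : HasDerivWithinAt f f' (Ici t) t :=
  h.mono_of_mem_nhdsWithin <| Filter.mem_of_superset (Icc_mem_nhdsGE_of_mem ⟨le_rfl, ht.2⟩)
    (Icc_subset_Icc_left ht.1)

lemma mapsTo_closedBall_of_hasDerivWithinAt {α : ℝ → E} {v : E → E} {a b R C : ℝ}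
    (hα : ∀ t ∈ Icc a b, HasDerivWithinAt α (v (α t)) (Icc a b) t) (hR : 0 ≤ R)
    (hC : ∀ x ∈ closedBall (α a) R, ‖v x‖ < C) (hCR : C * (b - a) ≤ R) :
    MapsTo α (Icc a b) (closedBall (α a) R) := by
  have hC0 : 0 ≤ C := (norm_nonneg _).trans (hC _ (mem_closedBall_self hR)).le
  have hle : ∀ t ∈ Icc a b, C * (t - a) ≤ R := fun t ht =>
    (mul_le_mul_of_nonneg_left (by linarith [ht.2]) hC0).trans hCR
  have hB : ∀ t, HasDerivAt (fun t => C * (t - a)) C t := fun t => by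
    simpa using ((hasDerivAt_id t).sub_const a).const_mul C
  intro t ht
  have key := image_norm_le_of_norm_deriv_right_lt_deriv_boundary (f := fun t => α t - α a)
    (fun t ht => (hα t ht).continuousWithinAt.sub continuousWithinAt_const)
    (fun t ht => (hasDerivWithinAt_Ici_of_Icc ht (hα t (Ico_subset_Icc_self ht))).sub_const (α a))
    (by simp) hB
    (fun s hs hs' => hC _ (by rw [mem_closedBall, dist_eq_norm, hs']; exact hle s ⟨hs.1, hs.2.le⟩))
    ht
  rw [mem_closedBall, dist_eq_norm]
  exact key.trans (hle t ht)

lemma exists_forall_mem_Icc_hasDerivWithinAt_mem_closedBall [CompleteSpace E] {v : E → E}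
    {x₀ : E} {a b R C : ℝ} {K : ℝ≥0} (hab : a ≤ b) (hR : 0 ≤ R)
    (hv : LipschitzOnWith K v (closedBall x₀ R)) (hC : ∀ x ∈ closedBall x₀ R, ‖v x‖ < C)
    (hCR : C * (b - a) ≤ R) :
    ∃ α : ℝ → E, α a = x₀ ∧
      ∀ t ∈ Icc a b, α t ∈ closedBall x₀ R ∧ HasDerivWithinAt α (v (α t)) (Icc a b) t := by
  have hC0 : 0 ≤ C := (norm_nonneg _).trans (hC _ (mem_closedBall_self hR)).le
  have hPL : IsPicardLindelof (fun _ => v) (⟨a, le_rfl, hab⟩ : Icc a b) x₀ R.toNNReal 0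
      C.toNNReal K := by
    refine ⟨fun _ _ => by rwa [Real.coe_toNNReal _ hR], fun _ _ => continuousOn_const,
      fun _ _ x hx => ?_, ?_⟩
    · rw [Real.coe_toNNReal _ hC0]
      exact (hC x (by rwa [Real.coe_toNNReal _ hR] at hx)).le
    · simpa [Real.coe_toNNReal _ hC0, Real.coe_toNNReal _ hR, max_eq_left (sub_nonneg.2 hab)]
        using hCR
  obtain ⟨α, hα0, hα⟩ := hPL.exists_eq_forall_mem_Icc_hasDerivWithinAt₀
  have hmaps := mapsTo_closedBall_of_hasDerivWithinAt hα hR (hα0 ▸ hC) hCR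
  exact ⟨α, hα0, fun t ht => ⟨hα0 ▸ hmaps ht, hα t ht⟩⟩

lemma hasDerivWithinAt_Icc_piecewise {f g : ℝ → E} {v : E → E} {a b c : ℝ} (hab : a ≤ b)
    (hbc : b ≤ c) (hf : ∀ t ∈ Icc a b, HasDerivWithinAt f (v (f t)) (Icc a b) t)
    (hg : ∀ t ∈ Icc b c, HasDerivWithinAt g (v (g t)) (Icc b c) t) (hfg : f b = g b) :
    ∀ t, HasDerivWithinAt ((Iic b).piecewise f g) (v ((Iic b).piecewise f g t)) (Icc a c) t := by
  set F := (Iic b).piecewise f g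
  have hFf : EqOn F f (Icc a b) := fun s hs => piecewise_eq_of_mem _ _ _ hs.2
  have hFg : EqOn F g (Icc b c) := fun s hs => by
    by_cases h : s ≤ b
    · rw [le_antisymm h hs.1, ← hfg]; exact piecewise_eq_of_mem _ _ _ (le_refl b)
    · exact piecewise_eq_of_notMem _ _ _ h
  intro t
  rw [← Icc_union_Icc_eq_Icc hab hbc]
  refine HasDerivWithinAt.union ?_ ?_
  · by_cases ht : t ∈ Icc a b
    · rw [hFf ht]; exact (hf t ht).congr hFf (hFf ht)
    · exact HasFDerivWithinAt.of_notMem_closure (by rwa [closure_Icc])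
  · by_cases ht : t ∈ Icc b c
    · rw [hFg ht]; exact (hg t ht).congr hFg (hFg ht)
    · exact HasFDerivWithinAt.of_notMem_closure (by rwa [closure_Icc])

end ODE

variable {x₀ : Fin N → ℝ} {s : Set ℝ} {T : ℝ} {f g : ℝ → Fin N → ℝ}

def SolvesAOn (x₀ : Fin N → ℝ) (s : Set ℝ) (f : ℝ → Fin N → ℝ) : Prop :=
  f 0 = x₀ ∧ ∀ t ∈ s, StrictAnti (f t) ∧ HasDerivWithinAt f (fieldA (f t)) s t

lemma SolvesAOn.mono {s' : Set ℝ} (hf : SolvesAOn x₀ s f) (hs : s' ⊆ s) : SolvesAOn x₀ s' f :=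
  ⟨hf.1, fun t ht => ⟨(hf.2 t (hs ht)).1, (hf.2 t (hs ht)).2.mono hs⟩⟩

lemma SolvesAOn.continuousOn (hf : SolvesAOn x₀ s f) : ContinuousOn f s :=
  fun t ht => (hf.2 t ht).2.continuousWithinAt

lemma SolvesAOn.sum_sq_eq (hf : SolvesAOn x₀ (Icc 0 T) f) :
    ∀ t ∈ Icc 0 T, ∑ i, f t i ^ 2 = ∑ i, x₀ i ^ 2 + N * (N - 1) * t := by
  have hV : ∀ t ∈ Icc 0 T,
      HasDerivWithinAt (fun s => ∑ i, f s i ^ 2) (N * (N - 1)) (Icc 0 T) t := fun t ht => by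
    refine (HasDerivWithinAt.fun_sum fun i _ =>
      (hasDerivWithinAt_pi.1 (hf.2 t ht).2 i).fun_pow 2).congr_deriv ?_
    have hsum := two_mul_sum_mul_fieldA_self (hf.2 t ht).1.injective
    rw [Fintype.card_fin] at hsum
    rw [← hsum, Finset.mul_sum]
    refine Finset.sum_congr rfl fun i _ => ?_
    push_cast
    ring
  have hlin : ∀ t, HasDerivAt (fun s => ∑ i, x₀ i ^ 2 + N * (N - 1) * s) (N * (N - 1)) t :=
    fun t => (((hasDerivAt_id' t).const_mul ((N : ℝ) * (N - 1))).const_add _).congr_deriv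
      (mul_one _)
  refine eq_of_has_deriv_right_eq (fun t ht => hasDerivWithinAt_Ici_of_Icc ht (hV t
    (Ico_subset_Icc_self ht))) (fun t _ => (hlin t).hasDerivWithinAt)
    (fun t ht => (hV t ht).continuousWithinAt) (fun t _ => (hlin t).continuousAt.continuousWithinAt)
    (by simp [hf.1])

lemma SolvesAOn.logGap_le (hf : SolvesAOn x₀ (Icc 0 T) f) :
    ∀ t ∈ Icc 0 T, logGap x₀ ≤ logGap (f t) := by
  have hH : ∀ t ∈ Icc 0 T, HasDerivWithinAt (fun s => logGap (f s))
      (∑ i, ∑ j ∈ Finset.univ.erase i, (fieldA (f t) i - fieldA (f t) j) / (f t i - f t j))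
      (Icc 0 T) t := fun t ht => by
    have hco := hasDerivWithinAt_pi.1 (hf.2 t ht).2
    exact HasDerivWithinAt.fun_sum fun i _ => HasDerivWithinAt.fun_sum fun j hj =>
      ((hco i).sub (hco j)).log
        (sub_ne_zero.2 ((hf.2 t ht).1.injective.ne (Finset.ne_of_mem_erase hj).symm))
  have hmono := monotoneOn_of_hasDerivWithinAt_nonneg (convex_Icc 0 T)
    (fun t ht => (hH t ht).continuousWithinAt)
    (fun t ht => by
      rw [interior_Icc] at ht ⊢
      exact (hH t (Ioo_subset_Icc_self ht)).mono Ioo_subset_Icc_self)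
    (fun t _ => by rw [two_mul_sum_sq_fieldA]; positivity)
  intro t ht
  simpa [hf.1] using hmono ⟨le_rfl, ht.1.trans ht.2⟩ ht ht.1

-- `2 √(∑ x₀ᵢ² + N (N - 1) T) + 1` bounds every gap up to time `T`; the `+ 1` keeps its `log`
-- nonnegative.
def gapBound (x₀ : Fin N → ℝ) (T : ℝ) : ℝ :=
  Real.exp (logGap x₀ - N * (N - 1) * Real.log (2 * √(∑ i, x₀ i ^ 2 + N * (N - 1) * T) + 1))

lemma SolvesAOn.mem_gapSet {T' : ℝ} (hf : SolvesAOn x₀ (Icc 0 T) f) (hT : T ≤ T') :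
    ∀ t ∈ Icc 0 T, f t ∈ gapSet (gapBound x₀ T') := by
  intro t ht i j hij
  set ρ := √(∑ i, x₀ i ^ 2 + N * (N - 1) * T')
  have hN0 : (0 : ℝ) ≤ N * (N - 1) := by
    rcases N with _ | n
    · simp
    · push_cast; nlinarith
  have hcoord : ∀ k, |f t k| ≤ ρ := fun k => by
    rw [← Real.sqrt_sq_eq_abs]
    refine Real.sqrt_le_sqrt ?_
    calc f t k ^ 2 ≤ ∑ i, f t i ^ 2 :=
          Finset.single_le_sum (f := fun i => f t i ^ 2) (fun _ _ => sq_nonneg _)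
            (Finset.mem_univ k)
      _ = ∑ i, x₀ i ^ 2 + N * (N - 1) * t := hf.sum_sq_eq t ht
      _ ≤ _ := by gcongr; exact ht.2.trans hT
  have hdiam : ∀ k l, |f t k - f t l| ≤ 2 * ρ + 1 := fun k l => by
    linarith [abs_sub (f t k) (f t l), hcoord k, hcoord l]
  have hgap := exp_logGap_le_abs_sub (hf.2 t ht).1.injective
    (by linarith [Real.sqrt_nonneg (∑ i, x₀ i ^ 2 + N * (N - 1) * T')]) hdiam hij.ne
  rw [Fintype.card_fin, abs_of_pos (sub_pos.2 ((hf.2 t ht).1 hij))] at hgap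
  refine le_trans (Real.exp_le_exp.2 ?_) hgap
  linarith [hf.logGap_le t ht]

lemma SolvesAOn.append {T' : ℝ} (hf : SolvesAOn x₀ (Icc 0 T) f) (hT : 0 ≤ T) (hTT' : T ≤ T')
    (hg : ∀ t ∈ Icc T T', StrictAnti (g t) ∧ HasDerivWithinAt g (fieldA (g t)) (Icc T T') t)
    (hgf : g T = f T) : SolvesAOn x₀ (Icc 0 T') ((Iic T).piecewise f g) := by
  refine ⟨(piecewise_eq_of_mem _ _ _ (show (0 : ℝ) ∈ Iic T from hT)).trans hf.1,
    fun t ht => ⟨?_, hasDerivWithinAt_Icc_piecewise hT hTT' (fun t ht => (hf.2 t ht).2)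
      (fun t ht => (hg t ht).2) hgf.symm t⟩⟩
  by_cases htT : t ≤ T
  · rw [Set.piecewise_eq_of_mem (Iic T) f g htT]; exact (hf.2 t ⟨ht.1, htT⟩).1
  · rw [Set.piecewise_eq_of_notMem (Iic T) f g htT]; exact (hg t ⟨(not_le.1 htT).le, ht.2⟩).1

theorem exists_pos_forall_solvesAOn_extend (x₀ : Fin N → ℝ) (T' : ℝ) :
    ∃ δ > 0, ∀ T ∈ Icc 0 T', ∀ f, SolvesAOn x₀ (Icc 0 T) f →
      ∃ g, SolvesAOn x₀ (Icc 0 (min (T + δ) T')) g := by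
  set ε := gapBound x₀ T'
  have hε : 0 < ε := Real.exp_pos _
  set C := 2 * N / ε + 1
  have hC : 0 < C := by positivity
  have hδ : 0 < ε / 4 / C := by positivity
  refine ⟨ε / 4 / C, hδ, fun T hT f hf => ?_⟩
  have hTT' : T ≤ min (T + ε / 4 / C) T' := le_min (by linarith) hT.2
  have hball : closedBall (f T) (ε / 4) ⊆ gapSet (ε / 2) := by
    convert closedBall_subset_gapSet (hf.mem_gapSet hT.2 T ⟨hT.1, le_rfl⟩) using 2
    ring
  have hnorm : ∀ x ∈ closedBall (f T) (ε / 4), ‖fieldA x‖ < C := fun x hx => by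
    refine (norm_fieldA_le (half_pos hε) (hball hx)).trans_lt ?_
    rw [div_div_eq_mul_div, mul_comm]
    exact lt_add_one _
  have hstep : C * (min (T + ε / 4 / C) T' - T) ≤ ε / 4 := by
    calc C * (min (T + ε / 4 / C) T' - T) ≤ C * (ε / 4 / C) := by
          gcongr; linarith [min_le_left (T + ε / 4 / C) T']
      _ = ε / 4 := by field_simp
  obtain ⟨h, hhT, hh⟩ := exists_forall_mem_Icc_hasDerivWithinAt_mem_closedBall hTT'
    (by positivity) ((lipschitzOnWith_fieldA (half_pos hε)).mono hball) hnorm hstep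
  exact ⟨_, hf.append hT.1 hTT' (fun t ht => ⟨strictAnti_of_mem_gapSet (half_pos hε)
    (hball (hh t ht).1), (hh t ht).2⟩) hhT⟩

theorem exists_solvesAOn_Icc (hx₀ : StrictAnti x₀) (hT : 0 ≤ T) :
    ∃ f, SolvesAOn x₀ (Icc 0 T) f := by
  obtain ⟨δ, hδ, hstep⟩ := exists_pos_forall_solvesAOn_extend x₀ T
  have hiter : ∀ n : ℕ, ∃ f, SolvesAOn x₀ (Icc 0 (min (n * δ) T)) f := by
    intro n
    induction n with
    | zero =>
      refine ⟨fun _ => x₀, rfl, fun t ht => ?_⟩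
      rw [Nat.cast_zero, zero_mul, min_eq_left hT, Icc_self] at ht ⊢
      exact ⟨hx₀, HasFDerivWithinAt.singleton⟩
    | succ n ih =>
      obtain ⟨f, hf⟩ := ih
      obtain ⟨g, hg⟩ := hstep _ ⟨le_min (by positivity) hT, min_le_right _ _⟩ f hf
      refine ⟨g, hg.mono (Icc_subset_Icc_right (le_min ?_ (min_le_right _ _)))⟩
      rw [← min_add_add_right]
      exact min_le_min (by push_cast; linarith) (by linarith)
  obtain ⟨n, hn⟩ := exists_nat_ge (T / δ)
  obtain ⟨f, hf⟩ := hiter n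
  rw [min_eq_right ((div_le_iff₀ hδ).1 hn)] at hf
  exact ⟨f, hf⟩

theorem SolvesAOn.eqOn (hf : SolvesAOn x₀ (Icc 0 T) f) (hg : SolvesAOn x₀ (Icc 0 T) g) :
    EqOn f g (Icc 0 T) := by
  obtain ⟨ε, hε, hK⟩ := exists_subset_gapSet_of_isCompact
    ((isCompact_Icc.image_of_continuousOn hf.continuousOn).union
      (isCompact_Icc.image_of_continuousOn hg.continuousOn))
    (by rintro _ (⟨t, ht, rfl⟩ | ⟨t, ht, rfl⟩); exacts [(hf.2 t ht).1, (hg.2 t ht).1])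
  exact ODE_solution_unique_of_mem_Icc_right (v := fun _ => fieldA) (s := fun _ => gapSet ε)
    (fun _ _ => lipschitzOnWith_fieldA hε) hf.continuousOn
    (fun t ht => hasDerivWithinAt_Ici_of_Icc ht (hf.2 t (Ico_subset_Icc_self ht)).2)
    (fun t ht => hK (Or.inl (mem_image_of_mem f (Ico_subset_Icc_self ht)))) hg.continuousOn
    (fun t ht => hasDerivWithinAt_Ici_of_Icc ht (hg.2 t (Ico_subset_Icc_self ht)).2)
    (fun t ht => hK (Or.inr (mem_image_of_mem g (Ico_subset_Icc_self ht)))) (hf.1.trans hg.1.symm)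

theorem exists_solvesAOn_Ici (hx₀ : StrictAnti x₀) : ∃ φ, SolvesAOn x₀ (Ici 0) φ := by
  choose g hg using fun n : ℕ => exists_solvesAOn_Icc hx₀ n.cast_nonneg
  have hagree : ∀ m n : ℕ, m ≤ n → EqOn (g m) (g n) (Icc 0 m) := fun m n hmn =>
    (hg m).eqOn ((hg n).mono (Icc_subset_Icc_right (Nat.cast_le.2 hmn)))
  set φ := fun t => g ⌈t⌉₊ t
  have hφ : ∀ n : ℕ, EqOn φ (g n) (Icc 0 n) := fun n t ht => by
    rcases le_total ⌈t⌉₊ n with h | h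
    · exact hagree _ n h ⟨ht.1, Nat.le_ceil t⟩
    · exact (hagree n _ h ht).symm
  refine ⟨φ, (hφ 0 (by simp)).trans (hg 0).1, fun t ht => ?_⟩
  have htn : t < (⌈t⌉₊ + 1 : ℕ) := by push_cast; linarith [Nat.le_ceil t]
  have hnhds : Icc 0 ((⌈t⌉₊ + 1 : ℕ) : ℝ) ∈ 𝓝[Ici 0] t := by
    rw [← Ici_inter_Iic]; exact inter_mem_nhdsWithin _ (Iic_mem_nhds htn)
  obtain ⟨hA, hD⟩ := (hg _).2 t ⟨ht, htn.le⟩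
  rw [hφ _ ⟨ht, htn.le⟩]
  exact ⟨hA, (hD.mono_of_mem_nhdsWithin hnhds).congr_of_eventuallyEq
    (Filter.eventually_of_mem hnhds (hφ _)) (hφ _ ⟨ht, htn.le⟩)⟩

lemma solvesA_iff {φ : ℝ → Fin N → ℝ} :
    solvesA φ ↔ ∀ t ∈ Ici 0, HasDerivWithinAt φ (fieldA (φ t)) (Ici 0) t := by
  simp only [solvesA, hasDerivWithinAt_pi (φ := φ), fieldA, one_div]

end WeylChamberODE

open WeylChamberODE

theorem statement0 (N : ℕ) (x₀ : Fin N → ℝ) (hx₀ : interiorA x₀) :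
    ∃ φ : ℝ → Fin N → ℝ,
      (φ 0 = x₀ ∧ (∀ t ∈ Set.Ici (0:ℝ), interiorA (φ t)) ∧ solvesA φ) ∧
      (∀ ψ : ℝ → Fin N → ℝ,
        (ψ 0 = x₀ ∧ (∀ t ∈ Set.Ici (0:ℝ), interiorA (ψ t)) ∧ solvesA ψ) →
        ∀ t ∈ Set.Ici (0:ℝ), ψ t = φ t) := by
  obtain ⟨φ, hφ⟩ := exists_solvesAOn_Ici hx₀
  refine ⟨φ, ⟨hφ.1, fun t ht => (hφ.2 t ht).1, solvesA_iff.2 fun t ht => (hφ.2 t ht).2⟩, ?_⟩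
  rintro ψ ⟨hψ0, hψA, hψ⟩ t ht
  have hψ' : SolvesAOn x₀ (Set.Ici 0) ψ :=
    ⟨hψ0, fun s hs => ⟨hψA s hs, solvesA_iff.1 hψ s hs⟩⟩
  exact (hψ'.mono Set.Icc_subset_Ici_self).eqOn (hφ.mono Set.Icc_subset_Ici_self) ⟨ht, le_rfl⟩
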